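/- Let 0 < α < 1, let E be a real Hilbert space, (e_i)_{i∈ℕ} an orthonormal family in E, and c : ℕ → ℝ with the squared sequence nonincreasing ((c (i+1))² ≤ (c i)² for all i), Σ'_i ((c i)²)^α < ∞ (summable), and Σ'_i (c i)² < ∞ (summable). Let K ≥ 1 be a natural number with a := Σ_{i<K} (c i)² > 0. Set O = Σ'_{i∈ℕ} c_i • e_i and Ô = (‖O‖/√a) • Σ_{i<K} c_i • e_i. Then ‖O − Ô‖ ≤ √(2α/(1−α)) · exp( ((1−α)/(2α)) · (S^α(c) − log K) ). -/

import Mathlib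

/-- Operator Stabilizer Rényi entropy of a (countable) family of real Pauli coefficients. -/
noncomputable def OSE (α : ℝ) (c : ℕ → ℝ) : ℝ :=
  (1 / (1 - α)) * Real.log (∑' i, ((c i) ^ 2) ^ α)

/-!
Let `P = ∑_{i<K} cᵢ eᵢ`, so that `⟪P, O⟫ = ‖P‖²` and `Ô = (‖O‖/‖P‖) P`. Then
`‖O - Ô‖² = 2‖O‖(‖O‖ - ‖P‖) ≤ 2(‖O‖² - ‖P‖²) = 2 ∑_{i≥K} cᵢ²`.
For the tail, monotonicity gives `(n+1) (cₙ²)^α ≤ ∑ (cᵢ²)^α = M`, i.e. `cₙ² ≤ M^{1/α} (n+1)^{-1/α}`,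
and comparing `∑_{n≥K} (n+1)^{-1/α}` with `∫_K^∞ x^{-1/α} dx = α/(1-α) · K^{1-1/α}` gives
`∑_{i≥K} cᵢ² ≤ α/(1-α) · exp((1-α)/α · (Sᵅ(c) - log K))`, since `M^{1/α} = exp((1-α)/α · Sᵅ(c))`.
-/

open Finset Real
open scoped RealInnerProductSpace

section Orthonormal

variable {ι E : Type*} [NormedAddCommGroup E] [InnerProductSpace ℝ E] {e : ι → E}

theorem Orthonormal.norm_sum_smul_sq (he : Orthonormal ℝ e) (c : ι → ℝ) (s : Finset ι) :
    ‖∑ i ∈ s, c i • e i‖ ^ 2 = ∑ i ∈ s, c i ^ 2 := by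
  rw [← real_inner_self_eq_norm_sq, he.inner_sum]; simp [sq]

theorem Orthonormal.summable_smul [CompleteSpace E] (he : Orthonormal ℝ e) {c : ι → ℝ}
    (hc : Summable fun i => c i ^ 2) : Summable fun i => c i • e i := by
  simpa using (he.orthogonalFamily.summable_iff_norm_sq_summable c).mpr (by simpa using hc)

theorem Orthonormal.norm_tsum_smul_sq [CompleteSpace E] (he : Orthonormal ℝ e) {c : ι → ℝ}
    (hc : Summable fun i => c i ^ 2) : ‖∑' i, c i • e i‖ ^ 2 = ∑' i, c i ^ 2 := by
  refine tendsto_nhds_unique ?_ hc.hasSum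
  simpa only [Function.comp_apply, he.norm_sum_smul_sq] using
    ((continuous_norm.tendsto _).comp (he.summable_smul hc).hasSum).pow 2

theorem Orthonormal.inner_right_tsum (he : Orthonormal ℝ e) {c : ι → ℝ}
    (hs : Summable fun i => c i • e i) (j : ι) : ⟪e j, ∑' i, c i • e i⟫ = c j := by
  classical
  rw [← innerSL_apply_apply, (innerSL ℝ (e j)).map_tsum hs]
  simp [orthonormal_iff_ite.mp he]

end Orthonormal

theorem norm_sub_norm_div_norm_smul_sq_le {F : Type*} [NormedAddCommGroup F]
    [InnerProductSpace ℝ F] {x y : F} (h : ⟪y, x⟫ = ‖y‖ ^ 2) :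
    ‖x - (‖x‖ / ‖y‖) • y‖ ^ 2 ≤ 2 * (‖x‖ ^ 2 - ‖y‖ ^ 2) := by
  -- for `y ≠ 0` the left side is `2‖x‖(‖x‖ - ‖y‖)`, and `‖y‖ ≤ ‖x‖` by Cauchy–Schwarz
  rcases eq_or_ne ‖y‖ 0 with hy | hy
  · simp [norm_eq_zero.1 hy]; nlinarith [sq_nonneg ‖x‖]
  have hyx : ‖y‖ ≤ ‖x‖ := by
    have := h ▸ real_inner_le_norm y x
    nlinarith [norm_nonneg x, (norm_nonneg y).lt_of_ne' hy]
  rw [norm_sub_sq_real, real_inner_smul_right, real_inner_comm, h, norm_smul, norm_div,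
    norm_norm, norm_norm]
  field_simp
  nlinarith [norm_nonneg y]

theorem Antitone.succ_mul_le_tsum {f : ℕ → ℝ} (hf : Antitone f) (h0 : ∀ i, 0 ≤ f i)
    (hs : Summable f) (n : ℕ) : ((n : ℝ) + 1) * f n ≤ ∑' i, f i :=
  calc ((n : ℝ) + 1) * f n = #(range (n + 1)) • f n := by simp
    _ ≤ ∑ i ∈ range (n + 1), f i :=
        card_nsmul_le_sum _ _ _ fun i hi => hf (Nat.lt_succ_iff.mp (mem_range.mp hi))
    _ ≤ ∑' i, f i := hs.sum_le_tsum _ fun i _ => h0 i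

theorem Antitone.le_tsum_rpow_mul {b : ℕ → ℝ} (hb : Antitone b) (h0 : ∀ i, 0 ≤ b i)
    {α : ℝ} (hα : 0 < α) (hs : Summable fun i => b i ^ α) (n : ℕ) :
    b n ≤ (∑' i, b i ^ α) ^ α⁻¹ * ((n : ℝ) + 1) ^ (-α⁻¹) := by
  have hbα : Antitone fun i => b i ^ α := fun i j hij => rpow_le_rpow (h0 j) (hb hij) hα.le
  have hM : 0 ≤ ∑' i, b i ^ α := tsum_nonneg fun i => rpow_nonneg (h0 i) α
  have key := hbα.succ_mul_le_tsum (fun i => rpow_nonneg (h0 i) α) hs n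
  calc b n = (b n ^ α) ^ α⁻¹ := (rpow_rpow_inv (h0 n) hα.ne').symm
    _ ≤ ((∑' i, b i ^ α) / ((n : ℝ) + 1)) ^ α⁻¹ := by
        gcongr
        · exact rpow_nonneg (h0 n) α
        · rw [le_div_iff₀ (by positivity)]; linarith
    _ = _ := by rw [div_rpow hM (by positivity), rpow_neg (by positivity), div_eq_mul_inv]

theorem sum_range_rpow_neg_le {p x₀ : ℝ} (hp : 1 < p) (hx₀ : 0 < x₀) (N : ℕ) :
    ∑ i ∈ range N, (x₀ + ↑(i + 1)) ^ (-p) ≤ x₀ ^ (1 - p) / (p - 1) := by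
  have hanti : AntitoneOn (fun x : ℝ => x ^ (-p)) (Set.Icc x₀ (x₀ + N)) :=
    fun x hx y _ hxy => rpow_le_rpow_of_nonpos (hx₀.trans_le hx.1) hxy (by linarith)
  have hzero : (0 : ℝ) ∉ Set.uIcc x₀ (x₀ + N) := by
    rw [Set.uIcc_of_le (le_add_of_nonneg_right N.cast_nonneg)]
    exact fun h => hx₀.not_ge h.1
  have hint : ∫ x in x₀..x₀ + N, x ^ (-p) = (x₀ ^ (1 - p) - (x₀ + N) ^ (1 - p)) / (p - 1) := by
    rw [integral_rpow (Or.inr ⟨by linarith, hzero⟩), ← neg_div_neg_eq]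
    ring_nf
  calc _ ≤ ∫ x in x₀..x₀ + N, x ^ (-p) := hanti.sum_le_integral
    _ ≤ x₀ ^ (1 - p) / (p - 1) := by
        rw [hint]; gcongr; linarith [rpow_nonneg (by positivity : 0 ≤ x₀ + N) (1 - p)]

theorem Antitone.tsum_nat_add_le {b : ℕ → ℝ} (hb : Antitone b) (h0 : ∀ i, 0 ≤ b i)
    {α : ℝ} (hα0 : 0 < α) (hα1 : α < 1) (hs : Summable fun i => b i ^ α) {K : ℕ} (hK : 0 < K) :
    ∑' i, b (i + K) ≤ α / (1 - α) * (∑' i, b i ^ α) ^ α⁻¹ * (K : ℝ) ^ (1 - α⁻¹) := by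
  have hp : 1 < α⁻¹ := one_lt_inv₀ hα0 |>.2 hα1
  have hM : 0 ≤ (∑' i, b i ^ α) ^ α⁻¹ :=
    rpow_nonneg (tsum_nonneg fun i => rpow_nonneg (h0 i) α) _
  have hconst : α / (1 - α) = 1 / (α⁻¹ - 1) := by
    field_simp [(by linarith : 1 - α ≠ 0)]
  refine tsum_le_of_sum_range_le (fun i => h0 _) fun N => ?_
  calc ∑ i ∈ range N, b (i + K)
      ≤ ∑ i ∈ range N, (∑' i, b i ^ α) ^ α⁻¹ * ((K : ℝ) + ↑(i + 1)) ^ (-α⁻¹) := by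
        refine sum_le_sum fun i _ => ?_
        have h := hb.le_tsum_rpow_mul h0 hα0 hs (i + K)
        rwa [show ((i + K : ℕ) : ℝ) + 1 = K + ↑(i + 1) by push_cast; ring] at h
    _ ≤ (∑' i, b i ^ α) ^ α⁻¹ * ((K : ℝ) ^ (1 - α⁻¹) / (α⁻¹ - 1)) := by
        rw [← mul_sum]; gcongr; exact sum_range_rpow_neg_le hp (by exact_mod_cast hK) N
    _ = _ := by rw [hconst]; ring

theorem tsum_nat_add_sq_le_exp_OSE {α : ℝ} (hα0 : 0 < α) (hα1 : α < 1) {c : ℕ → ℝ}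
    (hmono : ∀ i, c (i + 1) ^ 2 ≤ c i ^ 2) (hsumα : Summable fun i => (c i ^ 2) ^ α)
    {K : ℕ} (hK : 0 < K) :
    ∑' i, c (i + K) ^ 2 ≤ α / (1 - α) * exp ((1 - α) / α * (OSE α c - log K)) := by
  set M := ∑' i, (c i ^ 2) ^ α
  have hK' : (0 : ℝ) < K := by exact_mod_cast hK
  -- an inequality rather than `rpow_def_of_pos`, so that `M = 0` needs no separate case
  have hM : M ^ α⁻¹ ≤ exp (log M * α⁻¹) := (le_abs_self _).trans (abs_rpow_le_exp_log_mul _ _)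
  have hexp : log M * α⁻¹ + log K * (1 - α⁻¹) = (1 - α) / α * (OSE α c - log K) := by
    rw [OSE]; field_simp [(by linarith : 1 - α ≠ 0)]; ring
  calc ∑' i, c (i + K) ^ 2 ≤ α / (1 - α) * M ^ α⁻¹ * (K : ℝ) ^ (1 - α⁻¹) :=
        (antitone_nat_of_succ_le hmono).tsum_nat_add_le (fun i => sq_nonneg _) hα0 hα1 hsumα hK
    _ ≤ α / (1 - α) * exp (log M * α⁻¹) * exp (log K * (1 - α⁻¹)) := by
        rw [rpow_def_of_pos hK']; gcongr
    _ = _ := by rw [mul_assoc, ← exp_add, hexp]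

theorem truncation_error_le_entropy_general {E : Type*} [NormedAddCommGroup E]
    [InnerProductSpace ℝ E] [CompleteSpace E]
    (α : ℝ) (hα0 : 0 < α) (hα1 : α < 1)
    (e : ℕ → E) (he : Orthonormal ℝ e)
    (c : ℕ → ℝ) (hmono : ∀ i, (c (i + 1)) ^ 2 ≤ (c i) ^ 2)
    (hsumα : Summable fun i => ((c i) ^ 2) ^ α)
    (hsum : Summable fun i => (c i) ^ 2)
    (K : ℕ) (hK : 1 ≤ K) :
    ‖(∑' i, c i • e i) -
        (‖∑' i, c i • e i‖ / Real.sqrt (∑ i ∈ Finset.range K, (c i) ^ 2)) •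
          ∑ i ∈ Finset.range K, c i • e i‖ ≤
      Real.sqrt (2 * α / (1 - α)) *
        Real.exp (((1 - α) / (2 * α)) * (OSE α c - Real.log K)) := by
  set O := ∑' i, c i • e i
  set P := ∑ i ∈ range K, c i • e i
  have hP : ‖P‖ ^ 2 = ∑ i ∈ range K, c i ^ 2 := he.norm_sum_smul_sq c _
  have hPO : ⟪P, O⟫ = ‖P‖ ^ 2 := by
    rw [hP, sum_inner]
    refine sum_congr rfl fun i _ => ?_
    rw [real_inner_smul_left, he.inner_right_tsum (he.summable_smul hsum), sq]
  have htail : ‖O‖ ^ 2 - ‖P‖ ^ 2 = ∑' i, c (i + K) ^ 2 := by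
    rw [hP, he.norm_tsum_smul_sq hsum, ← hsum.sum_add_tsum_nat_add K, add_sub_cancel_left]
  rw [← hP, sqrt_sq (norm_nonneg _)]
  refine (pow_le_pow_iff_left₀ (norm_nonneg _) (by positivity) two_ne_zero).1 ?_
  calc ‖O - (‖O‖ / ‖P‖) • P‖ ^ 2 ≤ 2 * ∑' i, c (i + K) ^ 2 :=
        htail ▸ norm_sub_norm_div_norm_smul_sq_le hPO
    _ ≤ 2 * (α / (1 - α) * exp ((1 - α) / α * (OSE α c - log K))) := by
        gcongr; exact tsum_nat_add_sq_le_exp_OSE hα0 hα1 hmono hsumα hK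
    _ = _ := by
        rw [mul_pow, sq_sqrt (by positivity), ← exp_nat_mul]
        field_simp [(by linarith : 1 - α ≠ 0)]
        ring_nf

/-- Combined Top-`K` truncation error bound in terms of the OSE:
`‖O - Ô‖ ≤ √(2α/(1-α)) · exp( ((1-α)/(2α)) (Sᵅ(c) - log K) )`. -/
theorem truncation_error_le_entropy {E : Type*} [NormedAddCommGroup E]
    [InnerProductSpace ℝ E] [CompleteSpace E]
    (α : ℝ) (hα0 : 0 < α) (hα1 : α < 1)
    (e : ℕ → E) (he : Orthonormal ℝ e)
    (c : ℕ → ℝ) (hmono : ∀ i, (c (i + 1)) ^ 2 ≤ (c i) ^ 2)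
    (hsumα : Summable fun i => ((c i) ^ 2) ^ α)
    (hsum : Summable fun i => (c i) ^ 2)
    (K : ℕ) (hK : 1 ≤ K) (ha : 0 < ∑ i ∈ Finset.range K, (c i) ^ 2) :
    ‖(∑' i, c i • e i) -
        (‖∑' i, c i • e i‖ / Real.sqrt (∑ i ∈ Finset.range K, (c i) ^ 2)) •
          ∑ i ∈ Finset.range K, c i • e i‖ ≤
      Real.sqrt (2 * α / (1 - α)) *
        Real.exp (((1 - α) / (2 * α)) * (OSE α c - Real.log K)) :=
  truncation_error_le_entropy_general α hα0 hα1 e he c hmono hsumα hsum K hK
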